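/- arXiv:1311.3268 — 7 statements merged into one kernel-verified Lean document; each statement's English description precedes it below -/
import Mathlib

section
/- The spectrum of the adjacency matrix of a 2-lift H of G given by a signing s is exactly the multiset union of the spectrum of A (the adjacency matrix of G) and the spectrum of A_s (the signed adjacency matrix): vectors of the form [v,v] for eigenvectors v of A and [u,−u] for eigenvectors u of A_s together form a full orthogonal eigenbasis of A_H. -/
open Matrix Polynomial

/-- The spectrum of the adjacency matrix of the 2-lift of `G` given by a
signing is exactly the multiset union of the spectrum of `A` and of `A_s`, expressed via
the characteristic polynomial identity `charpoly A_H = charpoly A * charpoly A_s`;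
moreover the vectors `[v,v]` and `[u,−u]` are always orthogonal. -/
theorem two_lift_spectrum
    (n : ℕ) (A As : Matrix (Fin n) (Fin n) ℝ)
    (hAsymm : A.IsSymm) (hAssymm : As.IsSymm)
    (AH : Matrix (Fin n ⊕ Fin n) (Fin n ⊕ Fin n) ℝ)
    (hAH : AH = (1/2 : ℝ) • Matrix.fromBlocks (A + As) (A - As) (A - As) (A + As)) :
    AH.charpoly = A.charpoly * As.charpoly ∧
    ∀ v u : Fin n → ℝ, (Sum.elim v v) ⬝ᵥ (Sum.elim u (-u)) = 0 := by
  constructor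
  · -- write AH as a symmetric block matrix
    set B : Matrix (Fin n) (Fin n) ℝ := (1/2 : ℝ) • (A + As) with hB
    set Cm : Matrix (Fin n) (Fin n) ℝ := (1/2 : ℝ) • (A - As) with hCm
    have hAH' : AH = Matrix.fromBlocks B Cm Cm B := by
      rw [hAH, ← Matrix.fromBlocks_smul]
    have hBC₁ : B + Cm = A := by
      ext i j
      simp [hB, hCm, Matrix.smul_apply, Matrix.add_apply, Matrix.sub_apply]
      ring
    have hBC₂ : B - Cm = As := by
      ext i j
      simp [hB, hCm, Matrix.smul_apply, Matrix.add_apply, Matrix.sub_apply]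
      ring
    have hmap : ∀ M N : Matrix (Fin n) (Fin n) ℝ,
        (M + N).map (⇑(Polynomial.C : ℝ →+* ℝ[X])) = M.map (⇑(Polynomial.C : ℝ →+* ℝ[X])) + N.map (⇑(Polynomial.C : ℝ →+* ℝ[X])) := by
      intro M N; ext i j; simp
    have hmaps : ∀ M N : Matrix (Fin n) (Fin n) ℝ,
        (M - N).map (⇑(Polynomial.C : ℝ →+* ℝ[X])) = M.map (⇑(Polynomial.C : ℝ →+* ℝ[X])) - N.map (⇑(Polynomial.C : ℝ →+* ℝ[X])) := by
      intro M N; ext i j; simp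
    have hscalar : (Matrix.scalar (Fin n ⊕ Fin n) (X : ℝ[X])) =
        Matrix.fromBlocks (Matrix.scalar (Fin n) (X : ℝ[X])) 0 0
          (Matrix.scalar (Fin n) (X : ℝ[X])) := by
      have h : (fun _ : Fin n ⊕ Fin n => (X : ℝ[X])) =
          Sum.elim (fun _ => (X : ℝ[X])) (fun _ => (X : ℝ[X])) := by
        ext (i | i) <;> rfl
      rw [Matrix.scalar_apply, h, ← Matrix.fromBlocks_diagonal]
      rfl
    have hchar : charmatrix AH =
        Matrix.fromBlocks (Matrix.scalar (Fin n) (X : ℝ[X]) - B.map (⇑(Polynomial.C)))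
          (-(Cm.map (⇑(Polynomial.C)))) (-(Cm.map (⇑(Polynomial.C))))
          (Matrix.scalar (Fin n) (X : ℝ[X]) - B.map (⇑(Polynomial.C))) := by
      rw [charmatrix, hAH', hscalar, RingHom.mapMatrix_apply, Matrix.fromBlocks_map]
      ext (i | i) (j | j) <;>
        simp [Matrix.fromBlocks, Matrix.sub_apply, Matrix.neg_apply]
    set P : Matrix (Fin n ⊕ Fin n) (Fin n ⊕ Fin n) ℝ[X] :=
      Matrix.fromBlocks 1 1 1 (-1) with hP
    have e1 : (Matrix.scalar (Fin n) (X : ℝ[X]) - B.map (⇑(Polynomial.C))) +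
        -(Cm.map (⇑(Polynomial.C))) = charmatrix A := by
      rw [charmatrix, ← hBC₁, RingHom.mapMatrix_apply, hmap]
      abel
    have e2 : (Matrix.scalar (Fin n) (X : ℝ[X]) - B.map (⇑(Polynomial.C))) -
        -(Cm.map (⇑(Polynomial.C))) = charmatrix As := by
      rw [charmatrix, ← hBC₂, RingHom.mapMatrix_apply, hmaps]
      abel
    have key : P * charmatrix AH * P =
        Matrix.fromBlocks (charmatrix A + charmatrix A) 0 0
          (charmatrix As + charmatrix As) := by
      rw [hchar, hP, Matrix.fromBlocks_multiply, Matrix.fromBlocks_multiply]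
      refine Matrix.fromBlocks_inj.mpr ⟨?_, ?_, ?_, ?_⟩ <;>
        simp only [Matrix.one_mul, Matrix.mul_one, Matrix.neg_mul, Matrix.mul_neg,
          neg_neg]
      · rw [← e1]; abel
      · abel
      · abel
      · rw [← e2]; abel
    have hPP : P * P = Matrix.fromBlocks ((2 : ℝ[X]) • 1) 0 0 ((2 : ℝ[X]) • 1) := by
      rw [hP, Matrix.fromBlocks_multiply]
      refine Matrix.fromBlocks_inj.mpr ⟨?_, ?_, ?_, ?_⟩ <;>
        simp only [Matrix.one_mul, Matrix.mul_one, Matrix.neg_mul, Matrix.mul_neg,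
          neg_neg]
      · rw [two_smul]
      · abel
      · abel
      · rw [two_smul]
    have hdetP : P.det * P.det = (2 : ℝ[X]) ^ n * (2 : ℝ[X]) ^ n := by
      rw [← Matrix.det_mul, hPP, Matrix.det_fromBlocks_zero₂₁, Matrix.det_smul]
      simp
    have h2 : (P * charmatrix AH * P).det =
        (2 : ℝ[X]) ^ n * A.charpoly * ((2 : ℝ[X]) ^ n * As.charpoly) := by
      rw [key, Matrix.det_fromBlocks_zero₂₁, ← two_smul ℝ[X] (charmatrix A),
        ← two_smul ℝ[X] (charmatrix As), Matrix.det_smul, Matrix.det_smul]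
      simp [Matrix.charpoly]
    have h3 : (P * charmatrix AH * P).det = P.det * P.det * AH.charpoly := by
      rw [Matrix.det_mul, Matrix.det_mul, Matrix.charpoly]; ring
    have hfin : ((2 : ℝ[X]) ^ n * (2 : ℝ[X]) ^ n) * AH.charpoly =
        ((2 : ℝ[X]) ^ n * (2 : ℝ[X]) ^ n) * (A.charpoly * As.charpoly) := by
      rw [← hdetP, ← h3, h2, hdetP]; ring
    have hne : ((2 : ℝ[X]) ^ n * (2 : ℝ[X]) ^ n) ≠ 0 :=
      mul_ne_zero (pow_ne_zero _ two_ne_zero) (pow_ne_zero _ two_ne_zero)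
    exact mul_left_cancel₀ hne hfin
  · intro v u
    simp [dotProduct, Fintype.sum_sum_type, mul_neg, ← Finset.sum_add_distrib]
end

section
/- Let G be a graph on n vertices, H a shift k-lift of G with shifts Shift(i,j) ∈ Z/kZ for each edge (i,j) (with Shift(j,i) = −Shift(i,j) mod k), and let ω be a k-th root of unity. Define the n×n Hermitian matrix A_s(ω) by A_s(ω)_{ij} = ω^{Shift(i,j)} if (i,j) is an edge and 0 otherwise. If v is an eigenvector of A_s(ω) with eigenvalue α, then the kn-dimensional vector v^l = [v, ωv, ω²v, …, ω^{k−1}v] is an eigenvector of the adjacency matrix of H with eigenvalue α. -/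
/-!
Write `ψ(a) = ω ^ a.val`; since `ω ^ k = 1`, `ψ` is an additive character of `ZMod k`, so the
lifted vector is `(x, i) ↦ ψ(i) v(x)`. In the fibre over `y`, the row `(x, i)` of the lift's
adjacency matrix has a single nonzero entry, at `(y, i + Shift x y)`, so it picks up
`ψ(i + Shift x y) v(y) = ψ(i) ψ(Shift x y) v(y)`. Summing over `y` gives
`ψ(i) (A_s(ω) v)(x) = α ψ(i) v(x)`. Only the character property of `ψ` matters, so the same
holds for edge-weighted graphs and voltages in any finite additive monoid.
-/

open Matrix

namespace ShiftLift

variable {V Γ R : Type*} [AddMonoid Γ] [DecidableEq Γ] [CommSemiring R]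

/-- The lift of the weighted graph `B` along the voltages `s`: the edge `x → y` of weight
`B x y` becomes the edges `(x, i) → (y, i + s x y)` of the same weight. -/
def liftAdj (B : Matrix V V R) (s : V → V → Γ) : Matrix (V × Γ) (V × Γ) R :=
  of fun p q => if q.2 = p.2 + s p.1 q.1 then B p.1 q.1 else 0

def twistedAdj (ψ : AddChar Γ R) (B : Matrix V V R) (s : V → V → Γ) : Matrix V V R :=
  of fun x y => B x y * ψ (s x y)

def liftVec (ψ : AddChar Γ R) (v : V → R) : V × Γ → R :=
  fun p => ψ p.2 * v p.1

omit [DecidableEq Γ] in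
lemma liftVec_smul (ψ : AddChar Γ R) (α : R) (v : V → R) :
    liftVec ψ (α • v) = α • liftVec ψ v := by
  ext p
  simp only [liftVec, Pi.smul_apply, smul_eq_mul]
  ring

variable [Fintype Γ] (B : Matrix V V R) (s : V → V → Γ) (ψ : AddChar Γ R) (v : V → R)

lemma sum_fibre_liftAdj_mul_liftVec (x y : V) (i : Γ) :
    ∑ j : Γ, liftAdj B s (x, i) (y, j) * liftVec ψ v (y, j) =
      ψ i * (twistedAdj ψ B s x y * v y) := by
  simp only [liftAdj, twistedAdj, liftVec, of_apply, ite_mul, zero_mul, Finset.sum_ite_eq',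
    Finset.mem_univ, if_true, AddChar.map_add_eq_mul]
  ring

theorem liftAdj_mulVec_liftVec [Fintype V] :
    liftAdj B s *ᵥ liftVec ψ v = liftVec ψ (twistedAdj ψ B s *ᵥ v) := by
  ext ⟨x, i⟩
  simp only [mulVec, dotProduct, Fintype.sum_prod_type, sum_fibre_liftAdj_mul_liftVec,
    ← Finset.mul_sum]
  rfl

end ShiftLift

open ShiftLift in
theorem shift_lift_eigenvector_general
    (n k : ℕ) [NeZero k] (A : Matrix (Fin n) (Fin n) ℝ)
    (Shift : Fin n → Fin n → ZMod k)
    (ω : ℂ) (hω : ω ^ k = 1)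
    (Asω : Matrix (Fin n) (Fin n) ℂ)
    (hAsω : ∀ i j, Asω i j = if A i j = 1 then ω ^ (Shift i j).val else 0)
    (AH : Matrix (Fin n × ZMod k) (Fin n × ZMod k) ℂ)
    (hAH : ∀ (x y : Fin n) (i j : ZMod k),
      AH (x, i) (y, j) = if A x y = 1 ∧ j = i + Shift x y then 1 else 0)
    (v : Fin n → ℂ) (α : ℂ) (hv : Asω.mulVec v = α • v) :
    AH.mulVec (fun p => ω ^ (p.2.val) * v p.1) =
      α • (fun p : Fin n × ZMod k => ω ^ (p.2.val) * v p.1) := by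
  let ψ := AddChar.zmodChar k hω
  let B : Matrix (Fin n) (Fin n) ℂ := of fun x y => if A x y = 1 then 1 else 0
  have hAH' : AH = liftAdj B Shift := by
    ext ⟨x, i⟩ ⟨y, j⟩
    simp only [hAH, liftAdj, B, of_apply, ite_and]
    split_ifs <;> rfl
  have hAsω' : Asω = twistedAdj ψ B Shift := by
    ext x y
    simp only [hAsω, twistedAdj, B, of_apply, ite_mul, one_mul, zero_mul]
    rfl
  calc AH *ᵥ liftVec ψ v = liftVec ψ (Asω *ᵥ v) := by
        rw [hAH', hAsω', liftAdj_mulVec_liftVec]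
    _ = α • liftVec ψ v := by rw [hv, liftVec_smul]

/-- For a shift `k`-lift `H` of `G` with shifts `Shift(i,j) ∈ ZMod k` and a
`k`-th root of unity `ω`, every eigenvector `v` of the Hermitian matrix `A_s(ω)` (entry
`ω^{Shift(i,j)}` on edges) with eigenvalue `α` lifts to the eigenvector
`[v, ωv, ω²v, …, ω^{k−1}v]` of the adjacency matrix of `H`, with eigenvalue `α`. -/
theorem shift_lift_eigenvector
    (n k : ℕ) [NeZero k] (A : Matrix (Fin n) (Fin n) ℝ)
    (Shift : Fin n → Fin n → ZMod k)
    (hA01 : ∀ i j, A i j = 0 ∨ A i j = 1)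
    (hAsymm : A.IsSymm)
    (hShift : ∀ i j, Shift j i = - Shift i j)
    (ω : ℂ) (hω : ω ^ k = 1)
    (Asω : Matrix (Fin n) (Fin n) ℂ)
    (hAsω : ∀ i j, Asω i j = if A i j = 1 then ω ^ (Shift i j).val else 0)
    (AH : Matrix (Fin n × ZMod k) (Fin n × ZMod k) ℂ)
    (hAH : ∀ (x y : Fin n) (i j : ZMod k),
      AH (x, i) (y, j) = if A x y = 1 ∧ j = i + Shift x y then 1 else 0)
    (v : Fin n → ℂ) (α : ℂ) (hv : Asω.mulVec v = α • v) :
    AH.mulVec (fun p => ω ^ (p.2.val) * v p.1) =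
      α • (fun p : Fin n × ZMod k => ω ^ (p.2.val) * v p.1) :=
  shift_lift_eigenvector_general n k A Shift ω hω Asω hAsω AH hAH v α hv
end

section
/- Let x, y ∈ C^n be eigenvectors of A_s(ω) and A_s(ω') respectively, where ω, ω' are distinct k-th roots of unity, and define the lifted vectors x^l = [x, ωx, …, ω^{k−1}x] and y^l = [y, ω'y, …, ω'^{k−1}y] in C^{kn}. Then ⟨x^l, y^l⟩ = 0. Moreover, if ω = ω' and x, y are orthogonal eigenvectors of A_s(ω), then x^l and y^l are also orthogonal. -/
open Matrix

lemma zmod_sum_val {k : ℕ} [NeZero k] (f : ℕ → ℂ) :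
    ∑ j : ZMod k, f j.val = ∑ i ∈ Finset.range k, f i := by
  refine Finset.sum_nbij' (fun j : ZMod k => j.val) (fun i : ℕ => (i : ZMod k))
    (fun a _ => Finset.mem_range.mpr (ZMod.val_lt a)) (fun a _ => Finset.mem_univ _)
    (fun a _ => by simp [ZMod.natCast_val, ZMod.cast_id]) 
    (fun a ha => ZMod.val_cast_of_lt (Finset.mem_range.mp ha))
    (fun a _ => rfl)

/-- Lifted vectors `x^l = [x, ωx, …, ω^{k−1}x]` and
`y^l = [y, ω'y, …, ω'^{k−1}y]` built from eigenvectors of `A_s(ω)` and `A_s(ω')` for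
distinct `k`-th roots of unity `ω ≠ ω'` are orthogonal; and for `ω = ω'`, orthogonal
eigenvectors `x ⊥ y` lift to orthogonal vectors. -/
theorem shift_lift_orthogonality
    (n k : ℕ) [NeZero k] (A : Matrix (Fin n) (Fin n) ℝ)
    (Shift : Fin n → Fin n → ZMod k)
    (hA01 : ∀ i j, A i j = 0 ∨ A i j = 1)
    (hShift : ∀ i j, Shift j i = - Shift i j)
    (Asω : ℂ → Matrix (Fin n) (Fin n) ℂ)
    (hAsω : ∀ t i j, Asω t i j = if A i j = 1 then t ^ (Shift i j).val else 0)
    (ω ω' : ℂ) (hω : ω ^ k = 1) (hω' : ω' ^ k = 1)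
    (x y : Fin n → ℂ) (α α' : ℂ)
    (hx : (Asω ω).mulVec x = α • x) (hy : (Asω ω').mulVec y = α' • y) :
    (ω ≠ ω' →
      star (fun p : Fin n × ZMod k => ω ^ p.2.val * x p.1) ⬝ᵥ
        (fun p : Fin n × ZMod k => ω' ^ p.2.val * y p.1) = 0) ∧
    (ω = ω' → star x ⬝ᵥ y = 0 →
      star (fun p : Fin n × ZMod k => ω ^ p.2.val * x p.1) ⬝ᵥ
        (fun p : Fin n × ZMod k => ω' ^ p.2.val * y p.1) = 0) := by
  have key : star (fun p : Fin n × ZMod k => ω ^ p.2.val * x p.1) ⬝ᵥ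
        (fun p : Fin n × ZMod k => ω' ^ p.2.val * y p.1)
      = (∑ j : ZMod k, (starRingEnd ℂ ω * ω') ^ j.val) * (star x ⬝ᵥ y) := by
    simp only [dotProduct, Pi.star_apply, Fintype.sum_prod_type, star_mul', star_pow,
      starRingEnd_apply]
    rw [Finset.sum_comm, Finset.sum_mul]
    refine Finset.sum_congr rfl fun j _ => ?_
    rw [Finset.mul_sum]
    refine Finset.sum_congr rfl fun i _ => ?_
    ring
  constructor
  · intro hne
    rw [key, zmod_sum_val]
    have hω0 : ω ≠ 0 := by
      intro h; rw [h, zero_pow (NeZero.ne k)] at hω; exact one_ne_zero hω.symm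
    have habs : starRingEnd ℂ ω * ω = 1 := by
      have h1 : (starRingEnd ℂ ω * ω) ^ k = 1 := by
        rw [mul_pow, ← map_pow, hω, _root_.map_one, one_mul]
      have h2 : starRingEnd ℂ ω * ω = ((Complex.normSq ω : ℝ) : ℂ) := by
        rw [mul_comm]; exact Complex.mul_conj ω
      rw [h2] at h1 ⊢
      have h5 : (Complex.normSq ω : ℝ) ^ k = 1 := by exact_mod_cast h1
      have h3 : (0:ℝ) ≤ Complex.normSq ω := Complex.normSq_nonneg ω
      have h6 : Complex.normSq ω = 1 := by
        rcases lt_trichotomy (Complex.normSq ω) 1 with h | h | h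
        · have := pow_lt_one₀ h3 h (NeZero.ne k); linarith
        · exact h
        · have := one_lt_pow₀ h (NeZero.ne k); linarith
      rw [h6]; norm_num
    set u := starRingEnd ℂ ω * ω' with hu
    have hu1 : u ≠ 1 := by
      intro h
      apply hne
      have : ω * u = ω * 1 := by rw [h]
      rw [hu] at this
      have h2 : (ω * starRingEnd ℂ ω) * ω' = ω := by rw [mul_one] at this; linear_combination this
      rw [mul_comm ω _, habs, one_mul] at h2
      exact h2.symm
    have huk : u ^ k = 1 := by
      rw [hu, mul_pow, ← map_pow, hω, hω', _root_.map_one, one_mul]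
    rw [geom_sum_eq hu1, huk]
    simp
  · intro _ hxy
    rw [key, hxy, mul_zero]
end

section
/- The eigenvalues of the adjacency matrix of a shift k-lift H of a graph G are exactly the multiset union over all k-th roots of unity ω of the eigenvalues of the Hermitian matrices A_s(ω). -/
/-!
Index the vertices of the lift by `V × ℤ/k` and let `F i j = ζ ^ (i * j)` be the discrete Fourier
matrix of a primitive `k`-th root of unity `ζ`. Column `j` of `F` is a character of `ℤ/k`, on which
the shift by `s` acts as multiplication by `(ζ ^ j) ^ s`; hence `A_H (1 ⊗ F) = (1 ⊗ F) D` with `D`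
block diagonal with blocks `A_s(ζ ^ j)`. Since `F` is a Vandermonde matrix on distinct nodes it is
invertible, so `A_H` and `D` have the same characteristic polynomial, and `ζ ^ j` runs over the
`k`-th roots of unity.
-/

open Matrix Polynomial
open scoped Kronecker

section Charpoly

variable {m o R : Type*} [Fintype m] [DecidableEq m] [CommRing R]

theorem charmatrix_blockDiagonal [Fintype o] [DecidableEq o] (M : o → Matrix m m R) :
    charmatrix (blockDiagonal M) = blockDiagonal fun i => charmatrix (M i) := by
  ext ⟨i, a⟩ ⟨j, b⟩
  by_cases hab : a = b
  · subst hab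
    by_cases hij : i = j <;> simp [blockDiagonal_apply, hij]
  · simp [blockDiagonal_apply, hab]

theorem charpoly_blockDiagonal [Fintype o] [DecidableEq o] (M : o → Matrix m m R) :
    (blockDiagonal M).charpoly = ∏ i, (M i).charpoly := by
  rw [charpoly, charmatrix_blockDiagonal, det_blockDiagonal]
  rfl

theorem charmatrix_mul_map_eq_map_mul_charmatrix {A B U : Matrix m m R} (h : A * U = U * B) :
    charmatrix A * U.map C = U.map C * charmatrix B := by
  rw [charmatrix, charmatrix, sub_mul, mul_sub, scalar_commute _ (Commute.all X),
    RingHom.mapMatrix_apply, RingHom.mapMatrix_apply, ← Matrix.map_mul, ← Matrix.map_mul, h]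

-- `U` need not be invertible: `det U` is cancelled in the domain `R[X]`.
theorem charpoly_eq_of_mul_eq_mul [IsDomain R] {A B U : Matrix m m R} (hU : U.det ≠ 0)
    (h : A * U = U * B) : A.charpoly = B.charpoly := by
  have hdet := congrArg det (charmatrix_mul_map_eq_map_mul_charmatrix h)
  rw [det_mul, det_mul, ← RingHom.mapMatrix_apply, ← RingHom.map_det, mul_comm] at hdet
  exact mul_left_cancel₀ (C_ne_zero.mpr hU) hdet

end Charpoly

theorem ZMod.val_finEquiv {k : ℕ} [NeZero k] (i : Fin k) : (ZMod.finEquiv k i).val = i := by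
  obtain ⟨k, rfl⟩ := Nat.exists_eq_succ_of_ne_zero (NeZero.ne k)
  rfl

theorem pow_zmod_val_add {M : Type*} [Monoid M] {k : ℕ} [NeZero k] {ω : M} (hω : ω ^ k = 1)
    (a b : ZMod k) : ω ^ (a + b).val = ω ^ a.val * ω ^ b.val := by
  rw [ZMod.val_add, ← pow_eq_pow_mod _ hω, pow_add]

theorem IsPrimitiveRoot.prod_map_nthRoots_one {R M : Type*} [CommRing R] [IsDomain R]
    [CommMonoid M] {k : ℕ} [NeZero k] {ζ : R} (hζ : IsPrimitiveRoot ζ k) (f : R → M) :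
    ((nthRoots k (1 : R)).map f).prod = ∏ j : ZMod k, f (ζ ^ j.val) := by
  rw [hζ.nthRoots_eq (one_pow k), Multiset.map_map]
  change ∏ i ∈ Finset.range k, f (ζ ^ i * 1) = _
  simp only [mul_one, Finset.prod_range fun i => f (ζ ^ i)]
  exact Fintype.prod_equiv (ZMod.finEquiv k).toEquiv _ _ fun i => by simp [ZMod.val_finEquiv]

def dftMatrix {R : Type*} [Monoid R] (k : ℕ) (ζ : R) : Matrix (ZMod k) (ZMod k) R :=
  of fun i j => ζ ^ (i.val * j.val)

theorem det_dftMatrix_ne_zero {R : Type*} [CommRing R] [IsDomain R] (k : ℕ) [NeZero k] {ζ : R}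
    (hζ : IsPrimitiveRoot ζ k) : (dftMatrix k ζ).det ≠ 0 := by
  let e := (ZMod.finEquiv k).toEquiv
  have hvandermonde :
      (dftMatrix k ζ).submatrix e e = vandermonde fun i : Fin k => ζ ^ (i : ℕ) := by
    ext i j
    simp [e, dftMatrix, vandermonde, ZMod.val_finEquiv, pow_mul]
  rw [← det_submatrix_equiv_self e, hvandermonde, det_vandermonde_ne_zero_iff]
  exact fun i j h => Fin.ext (hζ.pow_inj i.isLt j.isLt h)

section ShiftLift

variable {m : Type*} {k : ℕ}

def shiftLift (R : Type*) [Zero R] [One R] (P : m → m → Prop) [DecidableRel P]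
    (s : m → m → ZMod k) : Matrix (m × ZMod k) (m × ZMod k) R :=
  of fun (x, i) (y, j) => if P x y ∧ j = i + s x y then 1 else 0

variable (P : m → m → Prop) [DecidableRel P] (s : m → m → ZMod k)

-- The paper's `A_s(t)`.
def shiftMatrix {R : Type*} [Monoid R] [Zero R] (t : R) : Matrix m m R :=
  of fun x y => if P x y then t ^ (s x y).val else 0

variable [Fintype m] [DecidableEq m] [NeZero k] {R : Type*} [CommRing R]

theorem shiftLift_mul_kronecker_dftMatrix {ζ : R} (hζ : ζ ^ k = 1) :
    shiftLift R P s * ((1 : Matrix m m R) ⊗ₖ dftMatrix k ζ) =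
      ((1 : Matrix m m R) ⊗ₖ dftMatrix k ζ) *
        blockDiagonal fun j => shiftMatrix P s (ζ ^ j.val) := by
  ext ⟨x, i⟩ ⟨y, j⟩
  have hω : (ζ ^ j.val) ^ k = 1 := by rw [← pow_mul, mul_comm, pow_mul, hζ, one_pow]
  simp only [shiftLift, ite_and, dftMatrix, pow_mul', Matrix.mul_apply, of_apply,
    kroneckerMap_apply, one_apply, ite_mul, one_mul, zero_mul, mul_ite, mul_zero,
    Fintype.sum_prod_type, Finset.sum_ite_irrel, Finset.sum_ite_eq', Finset.mem_univ,
    ↓reduceIte, pow_zmod_val_add hω, Finset.sum_const_zero, shiftMatrix, blockDiagonal_apply]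
  rw [Fintype.sum_eq_single x fun z hz => by simp [Ne.symm hz]]
  simp

theorem charpoly_shiftLift [IsDomain R] {ζ : R} (hζ : IsPrimitiveRoot ζ k) :
    (shiftLift R P s).charpoly = ∏ j : ZMod k, (shiftMatrix P s (ζ ^ j.val)).charpoly := by
  have hU : ((1 : Matrix m m R) ⊗ₖ dftMatrix k ζ).det ≠ 0 := by
    rw [det_kronecker, det_one, one_pow, one_mul]
    exact pow_ne_zero _ (det_dftMatrix_ne_zero k hζ)
  rw [charpoly_eq_of_mul_eq_mul hU (shiftLift_mul_kronecker_dftMatrix P s hζ.pow_eq_one),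
    charpoly_blockDiagonal]

end ShiftLift

theorem shift_lift_spectrum_general
    (n k : ℕ) [NeZero k] (A : Matrix (Fin n) (Fin n) ℝ)
    (Shift : Fin n → Fin n → ZMod k)
    (Asω : ℂ → Matrix (Fin n) (Fin n) ℂ)
    (hAsω : ∀ t i j, Asω t i j = if A i j = 1 then t ^ (Shift i j).val else 0)
    (AH : Matrix (Fin n × ZMod k) (Fin n × ZMod k) ℂ)
    (hAH : ∀ (x y : Fin n) (i j : ZMod k),
      AH (x, i) (y, j) = if A x y = 1 ∧ j = i + Shift x y then 1 else 0) :
    AH.charpoly =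
      ((Polynomial.nthRoots k (1 : ℂ)).map (fun ω => (Asω ω).charpoly)).prod := by
  classical
  have hAH : AH = shiftLift ℂ (fun x y => A x y = 1) Shift := by
    ext ⟨x, i⟩ ⟨y, j⟩
    simp only [hAH, shiftLift, of_apply]
  have hAsω : Asω = shiftMatrix (fun x y => A x y = 1) Shift := by
    ext t x y
    simp only [hAsω, shiftMatrix, of_apply]
  have hζ := Complex.isPrimitiveRoot_exp k (NeZero.ne k)
  rw [hAH, hAsω, charpoly_shiftLift _ _ hζ, hζ.prod_map_nthRoots_one]

/-- The eigenvalues of the adjacency matrix of a shift `k`-lift `H` of `G`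
are exactly the multiset union, over all `k`-th roots of unity `ω`, of the eigenvalues of
the Hermitian matrices `A_s(ω)`; expressed as the characteristic polynomial of `A_H`
being the product of the characteristic polynomials of the `A_s(ω)`. -/
theorem shift_lift_spectrum
    (n k : ℕ) [NeZero k] (A : Matrix (Fin n) (Fin n) ℝ)
    (Shift : Fin n → Fin n → ZMod k)
    (hA01 : ∀ i j, A i j = 0 ∨ A i j = 1)
    (hAsymm : A.IsSymm)
    (hShift : ∀ i j, Shift j i = - Shift i j)
    (Asω : ℂ → Matrix (Fin n) (Fin n) ℂ)
    (hAsω : ∀ t i j, Asω t i j = if A i j = 1 then t ^ (Shift i j).val else 0)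
    (AH : Matrix (Fin n × ZMod k) (Fin n × ZMod k) ℂ)
    (hAH : ∀ (x y : Fin n) (i j : ZMod k),
      AH (x, i) (y, j) = if A x y = 1 ∧ j = i + Shift x y then 1 else 0) :
    AH.charpoly =
      ((Polynomial.nthRoots k (1 : ℂ)).map (fun ω => (Asω ω).charpoly)).prod :=
  shift_lift_spectrum_general n k A Shift Asω hAsω AH hAH
end

section
/- (Discretization Lemma) For any x ∈ R^n with ‖x‖_∞ ≤ 1/2 and any n×n matrix M with zero diagonal, there exists y ∈ {±1/2, ±1/4, ±1/8, …}^n (each coordinate a signed negative power of 2) such that |x^T M x| ≤ |y^T M y| and ‖y‖² ≤ 4‖x‖². Moreover, each entry of x with absolute value strictly between 2^{−i−1} and 2^{−i} is rounded (preserving sign) to either ±2^{−i} or ±2^{−i−1}. -/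
open Matrix

lemma quad_update {n : ℕ} (M : Matrix (Fin n) (Fin n) ℝ) (j : Fin n) (hjj : M j j = 0)
    (y : Fin n → ℝ) :
    ∃ C D : ℝ, ∀ t, (Function.update y j t) ⬝ᵥ M.mulVec (Function.update y j t) = C + D * t := by
  set y0 := Function.update y j 0 with hy0
  refine ⟨y0 ⬝ᵥ M.mulVec y0, y0 ⬝ᵥ M.mulVec (Pi.single j 1) + (Pi.single j 1) ⬝ᵥ M.mulVec y0, ?_⟩
  intro t
  have hu : Function.update y j t = y0 + t • (Pi.single j 1 : Fin n → ℝ) := by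
    funext k
    rcases eq_or_ne k j with rfl | h
    · simp [hy0]
    · simp [hy0, Function.update_of_ne h, Pi.single_eq_of_ne h]
  rw [hu]
  simp [Matrix.mulVec_add, Matrix.mulVec_smul, dotProduct_add, add_dotProduct,
    dotProduct_smul, smul_dotProduct, Matrix.mulVec_single,
    single_dotProduct, dotProduct_single, hjj, smul_eq_mul]
  ring

lemma between_abs {p q r : ℝ} (h1 : p ≤ r) (h2 : r ≤ q) : |r| ≤ |p| ∨ |r| ≤ |q| := by
  rcases le_or_gt 0 r with h | h
  · right; rw [abs_of_nonneg h]; exact h2.trans (le_abs_self q)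
  · left; rw [abs_of_neg h]; exact (neg_le_neg h1).trans (neg_le_abs p)

lemma exists_dyadic {r : ℝ} (h0 : 0 < r) (h1 : r ≤ 1/2) :
    ∃ i : ℕ, 1 ≤ i ∧ (2:ℝ)^(-(i:ℤ)-1) < r ∧ r ≤ (2:ℝ)^(-(i:ℤ)) := by
  set z := Int.clog 2 r with hz
  have hle : r ≤ (2:ℝ) ^ z := by exact_mod_cast Int.self_le_zpow_clog (by norm_num) r
  have hlt : (2:ℝ) ^ (z - 1) < r := by exact_mod_cast Int.zpow_pred_clog_lt_self (by norm_num) h0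
  have hzneg : z ≤ -1 := by
    have : Int.clog 2 r ≤ Int.clog 2 ((1:ℝ)/2) := Int.clog_mono_right h0 h1
    have h2 : Int.clog 2 ((1:ℝ)/2) = -1 := by
      have h3 := Int.clog_zpow (R := ℝ) (b := 2) (by norm_num) (-1)
      have : ((1:ℝ)/2) = (2:ℝ) ^ (-1 : ℤ) := by norm_num
      rw [this]; exact_mod_cast h3
    omega
  refine ⟨(-z).toNat, by omega, ?_, ?_⟩
  · have : (-((-z).toNat : ℤ)) = z := by omega
    rw [this]; simpa [sub_eq_add_neg] using hlt
  · have : (-((-z).toNat : ℤ)) = z := by omega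
    rw [this]; exact hle

lemma step_round {n : ℕ} (M : Matrix (Fin n) (Fin n) ℝ) (j : Fin n) (hjj : M j j = 0)
    (y : Fin n → ℝ) {a b : ℝ} (ha : a ≤ y j) (hb : y j ≤ b) :
    ∃ t, (t = a ∨ t = b) ∧
      |y ⬝ᵥ M.mulVec y| ≤
        |(Function.update y j t) ⬝ᵥ M.mulVec (Function.update y j t)| := by
  obtain ⟨C, D, hCD⟩ := quad_update M j hjj y
  have hy : y ⬝ᵥ M.mulVec y = C + D * y j := by
    have := hCD (y j); rwa [Function.update_eq_self] at this
  rcases le_or_gt 0 D with hD | hD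
  · have h1 : C + D * a ≤ C + D * y j := by nlinarith
    have h2 : C + D * y j ≤ C + D * b := by nlinarith
    rcases between_abs h1 h2 with h | h
    · exact ⟨a, Or.inl rfl, by rw [hy, hCD]; exact h⟩
    · exact ⟨b, Or.inr rfl, by rw [hy, hCD]; exact h⟩
  · have h1 : C + D * b ≤ C + D * y j := by nlinarith
    have h2 : C + D * y j ≤ C + D * a := by nlinarith
    rcases between_abs h1 h2 with h | h
    · exact ⟨b, Or.inr rfl, by rw [hy, hCD]; exact h⟩
    · exact ⟨a, Or.inl rfl, by rw [hy, hCD]; exact h⟩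

/-- The per-coordinate property of the rounded value `v` of `c`. -/
def GoodRound (c v : ℝ) : Prop :=
  v^2 ≤ 4 * c^2 ∧ (c = 0 → v = 0) ∧
  (c ≠ 0 → ∃ i : ℕ, v = (2:ℝ)^(-(i:ℤ)-1) ∨ v = -(2:ℝ)^(-(i:ℤ)-1)) ∧
  (∀ i : ℕ, (2:ℝ)^(-(i:ℤ)-1) < |c| → |c| < (2:ℝ)^(-(i:ℤ)) →
    (|v| = (2:ℝ)^(-(i:ℤ)) ∨ |v| = (2:ℝ)^(-(i:ℤ)-1)) ∧ Real.sign v = Real.sign c)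

lemma goodRound_zero : GoodRound 0 0 := by
  refine ⟨by norm_num, fun _ => rfl, fun h => absurd rfl h, fun i h1 h2 => ?_⟩
  rw [abs_zero] at h1
  exact absurd h1 (not_lt.2 (le_of_lt (zpow_pos two_pos _)))

lemma pick_interval {c : ℝ} (hc : c ≠ 0) (hc2 : |c| ≤ 1/2) :
    ∃ a b : ℝ, a ≤ c ∧ c ≤ b ∧ ∀ t, (t = a ∨ t = b) → GoodRound c t := by
  obtain ⟨i, hi1, hlow, hhigh⟩ := exists_dyadic (abs_pos.2 hc) hc2
  have hb2 : (2:ℝ)^(-(i:ℤ)) = 2 * (2:ℝ)^(-(i:ℤ)-1) := by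
    rw [mul_comm, ← zpow_add_one₀ (two_ne_zero : (2:ℝ) ≠ 0)]
    ring_nf
  have hpow1 : (0:ℝ) < (2:ℝ)^(-(i:ℤ)-1) := zpow_pos two_pos _
  have hpow0 : (0:ℝ) < (2:ℝ)^(-(i:ℤ)) := zpow_pos two_pos _
  have hexp : (2:ℝ)^(-(i:ℤ)) = (2:ℝ)^(-((i-1:ℕ):ℤ)-1) := by
    have : (((i-1:ℕ)):ℤ) = (i:ℤ) - 1 := by omega
    rw [this]; ring_nf
  have huniq : ∀ m : ℕ, (2:ℝ)^(-(m:ℤ)-1) < |c| → |c| < (2:ℝ)^(-(m:ℤ)) → m = i := by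
    intro m h1 h2
    have q1 : (2:ℝ)^(-(m:ℤ)-1) < (2:ℝ)^(-(i:ℤ)) := lt_of_lt_of_le h1 hhigh
    have q2 : (2:ℝ)^(-(i:ℤ)-1) < (2:ℝ)^(-(m:ℤ)) := lt_trans hlow h2
    rw [zpow_lt_zpow_iff_right₀ (by norm_num : (1:ℝ) < 2)] at q1 q2
    omega
  rcases hc.lt_or_gt with hneg | hpos
  · -- c < 0
    have habs : |c| = -c := abs_of_neg hneg
    refine ⟨-(2:ℝ)^(-(i:ℤ)), -(2:ℝ)^(-(i:ℤ)-1), by linarith [hhigh], by linarith [hlow], ?_⟩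
    intro t ht
    have htneg : t < 0 := by rcases ht with rfl | rfl <;> linarith
    have htabs : |t| = -t := abs_of_neg htneg
    have htle : -t ≤ (2:ℝ)^(-(i:ℤ)) := by rcases ht with rfl | rfl <;> linarith
    refine ⟨by nlinarith [sq_abs c], fun h => absurd h hc, fun _ => ?_, fun m h1 h2 => ?_⟩
    · rcases ht with rfl | rfl
      · exact ⟨i - 1, Or.inr (by rw [← hexp])⟩
      · exact ⟨i, Or.inr rfl⟩
    · have hm := huniq m h1 h2
      subst hm
      constructor
      · rcases ht with rfl | rfl
        · left; rw [htabs]; ring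
        · right; rw [htabs]; ring
      · rw [Real.sign_of_neg htneg, Real.sign_of_neg hneg]
  · -- 0 < c
    have habs : |c| = c := abs_of_pos hpos
    refine ⟨(2:ℝ)^(-(i:ℤ)-1), (2:ℝ)^(-(i:ℤ)), by linarith [hlow], by linarith [hhigh], ?_⟩
    intro t ht
    have htpos : 0 < t := by rcases ht with rfl | rfl <;> linarith
    have htabs : |t| = t := abs_of_pos htpos
    have htle : t ≤ (2:ℝ)^(-(i:ℤ)) := by rcases ht with rfl | rfl <;> linarith
    refine ⟨by nlinarith [sq_abs c], fun h => absurd h hc, fun _ => ?_, fun m h1 h2 => ?_⟩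
    · rcases ht with rfl | rfl
      · exact ⟨i, Or.inl rfl⟩
      · exact ⟨i - 1, Or.inl (by rw [← hexp])⟩
    · have hm := huniq m h1 h2
      subst hm
      constructor
      · rcases ht with rfl | rfl
        · right; exact htabs
        · left; exact htabs
      · rw [Real.sign_of_pos htpos, Real.sign_of_pos hpos]

/-- Discretization Lemma: for `x ∈ ℝ^n` with `‖x‖_∞ ≤ 1/2` and `M` with
zero diagonal, there is `y` with entries in `{0} ∪ {±1/2, ±1/4, …}` (nonzero exactly where
`x` is nonzero) with `|xᵀMx| ≤ |yᵀMy|`, `‖y‖² ≤ 4‖x‖²`, and each entry of `x` of absolute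
value strictly between `2^{−i−1}` and `2^{−i}` is rounded, preserving sign, to one of
`±2^{−i}`, `±2^{−i−1}`. -/
theorem discretization_lemma
    (n : ℕ) (M : Matrix (Fin n) (Fin n) ℝ)
    (hdiag : ∀ i, M i i = 0)
    (x : Fin n → ℝ) (hx : ∀ j, |x j| ≤ 1/2) :
    ∃ y : Fin n → ℝ,
      |x ⬝ᵥ M.mulVec x| ≤ |y ⬝ᵥ M.mulVec y| ∧
      (∑ j, (y j)^2) ≤ 4 * ∑ j, (x j)^2 ∧
      (∀ j, (x j = 0 → y j = 0) ∧
        (x j ≠ 0 → ∃ i : ℕ, y j = (2:ℝ)^(-(i:ℤ)-1) ∨ y j = -(2:ℝ)^(-(i:ℤ)-1))) ∧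
      (∀ j, ∀ i : ℕ, (2:ℝ)^(-(i:ℤ)-1) < |x j| → |x j| < (2:ℝ)^(-(i:ℤ)) →
        (|y j| = (2:ℝ)^(-(i:ℤ)) ∨ |y j| = (2:ℝ)^(-(i:ℤ)-1)) ∧
        Real.sign (y j) = Real.sign (x j)) := by
  classical
  have key : ∀ S : Finset (Fin n), ∃ y : Fin n → ℝ,
      (∀ j, j ∉ S → y j = x j) ∧ (∀ j ∈ S, GoodRound (x j) (y j)) ∧
      |x ⬝ᵥ M.mulVec x| ≤ |y ⬝ᵥ M.mulVec y| := by
    intro S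
    induction S using Finset.induction_on with
    | empty => exact ⟨x, fun _ _ => rfl, fun j hj => absurd hj (Finset.notMem_empty j), le_refl _⟩
    | @insert j S hj ih =>
      obtain ⟨y, hyout, hyin, hQ⟩ := ih
      have hyj : y j = x j := hyout j hj
      by_cases hxj : x j = 0
      · refine ⟨y, fun k hk => hyout k (fun h => hk (Finset.mem_insert_of_mem h)), ?_, hQ⟩
        intro k hk
        rcases Finset.mem_insert.1 hk with rfl | hk
        · rw [hyj, hxj]; exact goodRound_zero
        · exact hyin k hk
      · obtain ⟨a, b, ha, hb, hgood⟩ := pick_interval hxj (hx j)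
        obtain ⟨t, ht, hQt⟩ := step_round M j (hdiag j) y (a := a) (b := b) (by rw [hyj]; exact ha)
          (by rw [hyj]; exact hb)
        refine ⟨Function.update y j t, ?_, ?_, hQ.trans hQt⟩
        · intro k hk
          have hkj : k ≠ j := fun h => hk (h ▸ Finset.mem_insert_self j S)
          rw [Function.update_of_ne hkj]
          exact hyout k (fun h => hk (Finset.mem_insert_of_mem h))
        · intro k hk
          rcases Finset.mem_insert.1 hk with rfl | hk
          · rw [Function.update_self]; exact hgood t ht
          · have hkj : k ≠ j := fun h => hj (h ▸ hk)
            rw [Function.update_of_ne hkj]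
            exact hyin k hk
  obtain ⟨y, _, hyin, hQ⟩ := key Finset.univ
  have hg : ∀ j, GoodRound (x j) (y j) := fun j => hyin j (Finset.mem_univ j)
  refine ⟨y, hQ, ?_, fun j => ⟨(hg j).2.1, (hg j).2.2.1⟩, fun j i h1 h2 => (hg j).2.2.2 i h1 h2⟩
  rw [Finset.mul_sum]
  exact Finset.sum_le_sum fun j _ => (hg j).1
end

section
/- (Bilinear Discretization Lemma) For any x₁, x₂ ∈ R^n with ‖x₁‖_∞, ‖x₂‖_∞ ≤ 1/2 and any real n×n matrix M, there exist y₁, y₂ ∈ {±1/2, ±1/4, …}^n such that |x₁^T M x₂| ≤ |y₁^T M y₂|, ‖y₁‖² ≤ 4‖x₁‖², ‖y₂‖² ≤ 4‖x₂‖², and each entry of x₁, x₂ with absolute value between 2^{−i−1} and 2^{−i} is rounded to either ±2^{−i} or ±2^{−i−1}. -/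
/-!
Every coordinate `t` with `|t| ≤ 1/2` lies between its two admissible roundings, the signed powers
of two enclosing it, so a vector `x` lies in the convex hull of the product of the sets of
admissible roundings of its coordinates. The function `|B(·, x₂)|`, with `B(u, v) = uᵀ M v`,
is convex, so by the maximum principle it does not decrease when `x₁` is replaced by a suitable
vertex `y₁` of that hull; then `|B(y₁, ·)|` does the same for `x₂`.
-/

open Matrix Finset

section MaximumPrinciple

variable {E F : Type*} [AddCommGroup E] [Module ℝ E] [AddCommGroup F] [Module ℝ F]

theorem LinearMap.exists_abs_apply_le_of_mem_convexHull (f : E →ₗ[ℝ] ℝ) {s : Set E} {x : E}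
    (hx : x ∈ convexHull ℝ s) : ∃ y ∈ s, |f x| ≤ |f y| :=
  (convexOn_univ_norm.comp_linearMap f).exists_ge_of_mem_convexHull (Set.subset_univ _) hx

theorem LinearMap.exists_abs_apply₂_le_of_mem_convexHull (B : E →ₗ[ℝ] F →ₗ[ℝ] ℝ)
    {s : Set E} {t : Set F} {x₁ : E} {x₂ : F} (hx₁ : x₁ ∈ convexHull ℝ s)
    (hx₂ : x₂ ∈ convexHull ℝ t) : ∃ y₁ ∈ s, ∃ y₂ ∈ t, |B x₁ x₂| ≤ |B y₁ y₂| := by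
  obtain ⟨y₁, hy₁, h₁⟩ := (B.flip x₂).exists_abs_apply_le_of_mem_convexHull hx₁
  obtain ⟨y₂, hy₂, h₂⟩ := (B y₁).exists_abs_apply_le_of_mem_convexHull hx₂
  exact ⟨y₁, hy₁, y₂, hy₂, h₁.trans h₂⟩

end MaximumPrinciple

structure IsDyadicRounding (x y : ℝ) : Prop where
  sq_le : y ^ 2 ≤ 4 * x ^ 2
  eq_zero : x = 0 → y = 0
  exists_eq_zpow : x ≠ 0 → ∃ i : ℕ, y = (2:ℝ) ^ (-(i:ℤ) - 1) ∨ y = -(2:ℝ) ^ (-(i:ℤ) - 1)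
  abs_eq_and_sign_eq : ∀ i : ℕ, (2:ℝ) ^ (-(i:ℤ) - 1) < |x| → |x| < (2:ℝ) ^ (-(i:ℤ)) →
    (|y| = (2:ℝ) ^ (-(i:ℤ)) ∨ |y| = (2:ℝ) ^ (-(i:ℤ) - 1)) ∧ Real.sign y = Real.sign x

namespace IsDyadicRounding

theorem zero : IsDyadicRounding 0 0 where
  sq_le := by norm_num
  eq_zero _ := rfl
  exists_eq_zpow h := absurd rfl h
  abs_eq_and_sign_eq i h _ := absurd h (by simpa using (zpow_pos two_pos _).le)

theorem neg {x y : ℝ} (h : IsDyadicRounding x y) : IsDyadicRounding (-x) (-y) where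
  sq_le := by simpa using h.sq_le
  eq_zero hx := by rw [h.eq_zero (neg_eq_zero.mp hx), neg_zero]
  exists_eq_zpow hx := by
    obtain ⟨i, hi | hi⟩ := h.exists_eq_zpow (neg_ne_zero.mp hx)
    exacts [⟨i, Or.inr (by rw [hi])⟩, ⟨i, Or.inl (by rw [hi, neg_neg])⟩]
  abs_eq_and_sign_eq i h₁ h₂ := by
    rw [abs_neg] at h₁ h₂ ⊢
    obtain ⟨habs, hsign⟩ := h.abs_eq_and_sign_eq i h₁ h₂
    exact ⟨habs, by rw [Real.sign_neg, Real.sign_neg, hsign]⟩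

theorem zpow_of_mem_Ioc {x : ℝ} {z k : ℤ} (hx : x ∈ Set.Ioc ((2:ℝ) ^ z) (2 ^ (z + 1)))
    (hk : k = z ∨ k = z + 1) (hk₁ : k ≤ -1) : IsDyadicRounding x ((2:ℝ) ^ k) := by
  obtain ⟨hzx, hxz⟩ := hx
  have hz₀ : (0:ℝ) < 2 ^ z := zpow_pos two_pos z
  have hk₀ : (0:ℝ) < 2 ^ k := zpow_pos two_pos k
  have hx₀ : 0 < x := hz₀.trans hzx
  refine ⟨?_, fun hx => absurd hx hx₀.ne', fun _ => ⟨(-k - 1).toNat, Or.inl ?_⟩, ?_⟩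
  · have hkz : (2:ℝ) ^ k ≤ 2 * 2 ^ z := by
      rw [← zpow_one_add₀ two_ne_zero]
      exact zpow_le_zpow_right₀ one_le_two (by omega)
    nlinarith
  · congr 1
    omega
  · intro i h₁ h₂
    rw [abs_of_pos hx₀] at h₁ h₂
    have hi₁ : -(i:ℤ) - 1 < z + 1 := (zpow_lt_zpow_iff_right₀ one_lt_two).mp (h₁.trans_le hxz)
    have hi₂ : z < -(i:ℤ) := (zpow_lt_zpow_iff_right₀ one_lt_two).mp (hzx.trans h₂)
    rw [abs_of_pos hk₀, Real.sign_of_pos hk₀, Real.sign_of_pos hx₀]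
    refine ⟨?_, rfl⟩
    rcases hk with rfl | rfl
    · exact Or.inr (by congr 1; omega)
    · exact Or.inl (by congr 1; omega)

end IsDyadicRounding

theorem mem_convexHull_setOf_isDyadicRounding_of_pos {x : ℝ} (hx₀ : 0 < x) (hx : x ≤ 1 / 2) :
    x ∈ convexHull ℝ {y | IsDyadicRounding x y} := by
  obtain ⟨z, hz⟩ := exists_mem_Ioc_zpow hx₀ one_lt_two
  have hz₁ : z + 1 ≤ -1 := by
    have : (2:ℝ) ^ z < 2 ^ (-1 : ℤ) := hz.1.trans_le (by norm_num [hx])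
    have := (zpow_lt_zpow_iff_right₀ one_lt_two).mp this
    omega
  refine segment_subset_convexHull (IsDyadicRounding.zpow_of_mem_Ioc hz (Or.inl rfl) (by omega))
    (IsDyadicRounding.zpow_of_mem_Ioc hz (Or.inr rfl) hz₁) ?_
  rw [segment_eq_Icc (zpow_le_zpow_right₀ one_le_two (by omega))]
  exact Set.Ioc_subset_Icc_self hz

theorem mem_convexHull_setOf_isDyadicRounding {x : ℝ} (hx : |x| ≤ 1 / 2) :
    x ∈ convexHull ℝ {y | IsDyadicRounding x y} := by
  rcases lt_trichotomy x 0 with hneg | rfl | hpos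
  · have hmem := mem_convexHull_setOf_isDyadicRounding_of_pos (neg_pos.mpr hneg)
      (by rwa [abs_of_neg hneg] at hx)
    have hsub : {y | IsDyadicRounding (-x) y} ⊆ -{y | IsDyadicRounding x y} := fun y hy => by
      simpa using hy.neg
    have := convexHull_mono hsub hmem
    rwa [convexHull_neg, Set.mem_neg, neg_neg] at this
  · exact subset_convexHull ℝ _ IsDyadicRounding.zero
  · exact mem_convexHull_setOf_isDyadicRounding_of_pos hpos (by rwa [abs_of_pos hpos] at hx)

theorem mem_convexHull_pi_setOf_isDyadicRounding {ι : Type*} [Finite ι] {x : ι → ℝ}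
    (hx : ∀ j, |x j| ≤ 1 / 2) :
    x ∈ convexHull ℝ (Set.univ.pi fun j => {y | IsDyadicRounding (x j) y}) := by
  rw [convexHull_pi]
  exact fun j _ => mem_convexHull_setOf_isDyadicRounding (hx j)

theorem IsDyadicRounding.sum_sq_le {ι : Type*} (s : Finset ι) {x y : ι → ℝ}
    (h : ∀ j, IsDyadicRounding (x j) (y j)) : ∑ j ∈ s, y j ^ 2 ≤ 4 * ∑ j ∈ s, x j ^ 2 := by
  rw [mul_sum]
  exact sum_le_sum fun j _ => (h j).sq_le

/-- Bilinear Discretization Lemma: for `x₁, x₂ ∈ ℝ^n` with sup-norm at most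
`1/2` and any real matrix `M`, there are `y₁, y₂` with entries in `{0} ∪ {±1/2, ±1/4, …}`
such that `|x₁ᵀMx₂| ≤ |y₁ᵀMy₂|`, `‖y₁‖² ≤ 4‖x₁‖²`, `‖y₂‖² ≤ 4‖x₂‖²`, and each entry of
`x₁, x₂` with absolute value between `2^{−i−1}` and `2^{−i}` is rounded, preserving sign,
to one of `±2^{−i}`, `±2^{−i−1}`. -/
theorem bilinear_discretization_lemma
    (n : ℕ) (M : Matrix (Fin n) (Fin n) ℝ)
    (x₁ x₂ : Fin n → ℝ) (hx₁ : ∀ j, |x₁ j| ≤ 1/2) (hx₂ : ∀ j, |x₂ j| ≤ 1/2) :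
    ∃ y₁ y₂ : Fin n → ℝ,
      |x₁ ⬝ᵥ M.mulVec x₂| ≤ |y₁ ⬝ᵥ M.mulVec y₂| ∧
      (∑ j, (y₁ j)^2) ≤ 4 * ∑ j, (x₁ j)^2 ∧
      (∑ j, (y₂ j)^2) ≤ 4 * ∑ j, (x₂ j)^2 ∧
      (∀ j, (x₁ j = 0 → y₁ j = 0) ∧
        (x₁ j ≠ 0 → ∃ i : ℕ, y₁ j = (2:ℝ)^(-(i:ℤ)-1) ∨ y₁ j = -(2:ℝ)^(-(i:ℤ)-1))) ∧
      (∀ j, (x₂ j = 0 → y₂ j = 0) ∧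
        (x₂ j ≠ 0 → ∃ i : ℕ, y₂ j = (2:ℝ)^(-(i:ℤ)-1) ∨ y₂ j = -(2:ℝ)^(-(i:ℤ)-1))) ∧
      (∀ j, ∀ i : ℕ, (2:ℝ)^(-(i:ℤ)-1) < |x₁ j| → |x₁ j| < (2:ℝ)^(-(i:ℤ)) →
        (|y₁ j| = (2:ℝ)^(-(i:ℤ)) ∨ |y₁ j| = (2:ℝ)^(-(i:ℤ)-1)) ∧
        Real.sign (y₁ j) = Real.sign (x₁ j)) ∧
      (∀ j, ∀ i : ℕ, (2:ℝ)^(-(i:ℤ)-1) < |x₂ j| → |x₂ j| < (2:ℝ)^(-(i:ℤ)) →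
        (|y₂ j| = (2:ℝ)^(-(i:ℤ)) ∨ |y₂ j| = (2:ℝ)^(-(i:ℤ)-1)) ∧
        Real.sign (y₂ j) = Real.sign (x₂ j)) := by
  obtain ⟨y₁, hy₁, y₂, hy₂, hB⟩ := (toLinearMap₂' ℝ M).exists_abs_apply₂_le_of_mem_convexHull
    (mem_convexHull_pi_setOf_isDyadicRounding hx₁) (mem_convexHull_pi_setOf_isDyadicRounding hx₂)
  replace hy₁ : ∀ j, IsDyadicRounding (x₁ j) (y₁ j) := fun j => hy₁ j trivial
  replace hy₂ : ∀ j, IsDyadicRounding (x₂ j) (y₂ j) := fun j => hy₂ j trivial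
  simp only [toLinearMap₂'_apply'] at hB
  exact ⟨y₁, y₂, hB, IsDyadicRounding.sum_sq_le _ hy₁, IsDyadicRounding.sum_sq_le _ hy₂,
    fun j => ⟨(hy₁ j).eq_zero, (hy₁ j).exists_eq_zpow⟩,
    fun j => ⟨(hy₂ j).eq_zero, (hy₂ j).exists_eq_zpow⟩,
    fun j => (hy₁ j).abs_eq_and_sign_eq, fun j => (hy₂ j).abs_eq_and_sign_eq⟩
end

section
/- Let y ∈ R^n be a vector with diadic decomposition y = ∑_i 2^{−i} u_i, where u_i ∈ {0,±1}^n have pairwise disjoint supports, and suppose every support satisfies |S(u_i)| ≤ n/d². Let J be the all-ones matrix and let y' be the entrywise absolute value of y. Then y'^T (d/n)J y' ≤ 4‖y‖²/d. -/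
open Matrix
open scoped Classical

/-!
Write `a = |y|`; every nonzero `a k` is a power `2⁻¹ ^ (i + 1)` and each such level is hit at most
`c = n / d²` times. Summing all `a k ≤ a j` level by level gives a geometric series, so
`∑_{a k ≤ a j} a k ≤ 2 c a j`. Splitting `(∑ a)² = ∑_{j,k} a j a k` according to which of
`a j`, `a k` is larger then yields `(∑ a)² ≤ 4 c ∑ a²`, and `y'ᵀ (d/n) J y' = (d/n) (∑ a)²`.
-/

open Finset

lemma two_zpow_neg_natCast_sub_one (i : ℕ) : (2 : ℝ) ^ (-(i : ℤ) - 1) = 2⁻¹ ^ (i + 1) := by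
  rw [show -(i : ℤ) - 1 = -((i + 1 : ℕ) : ℤ) by push_cast; ring, _root_.zpow_neg, zpow_natCast,
    inv_pow]

lemma sum_inv_two_pow_succ_le {m : ℕ} (T : Finset ℕ) (hT : ∀ i ∈ T, m ≤ i) :
    ∑ i ∈ T, (2⁻¹ : ℝ) ^ (i + 1) ≤ 2⁻¹ ^ m := by
  have hsub : T ⊆ Ico m (T.sup id + 1) := fun i hi =>
    mem_Ico.2 ⟨hT i hi, Nat.lt_succ_of_le (le_sup (f := id) hi)⟩
  calc ∑ i ∈ T, (2⁻¹ : ℝ) ^ (i + 1)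
      ≤ ∑ i ∈ Ico m (T.sup id + 1), (2⁻¹ : ℝ) ^ (i + 1) :=
        sum_le_sum_of_subset_of_nonneg hsub fun _ _ _ => by positivity
    _ = 2⁻¹ * ∑ i ∈ Ico m (T.sup id + 1), (2⁻¹ : ℝ) ^ i := by
        rw [mul_sum]; exact sum_congr rfl fun _ _ => pow_succ' _ _
    _ ≤ 2⁻¹ * (2⁻¹ ^ m / (1 - 2⁻¹)) := by
        gcongr; exact geom_sum_Ico_le_of_lt_one (by norm_num) (by norm_num)
    _ = 2⁻¹ ^ m := by ring

lemma sq_sum_le_two_mul_sum_mul_sum_filter_le {ι : Type*} [Fintype ι] (a : ι → ℝ)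
    (ha : ∀ k, 0 ≤ a k) :
    (∑ j, a j) ^ 2 ≤ 2 * ∑ j, a j * ∑ k with a k ≤ a j, a k := by
  have hsymm : ∑ j, ∑ k, (if a j ≤ a k then a j * a k else 0)
      = ∑ j, ∑ k, (if a k ≤ a j then a j * a k else 0) := by
    rw [sum_comm]; simp only [mul_comm]
  calc (∑ j, a j) ^ 2 = ∑ j, ∑ k, a j * a k := by rw [sq, sum_mul_sum]
    _ ≤ ∑ j, ∑ k, ((if a k ≤ a j then a j * a k else 0) +
          if a j ≤ a k then a j * a k else 0) := by
        gcongr with j _ k _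
        have := mul_nonneg (ha j) (ha k)
        split_ifs <;> linarith [le_total (a j) (a k)]
    _ = 2 * ∑ j, a j * ∑ k with a k ≤ a j, a k := by
        simp only [sum_add_distrib, hsymm, ← two_mul]
        simp only [mul_sum, sum_filter, mul_ite, mul_zero]

lemma dotProduct_smul_ones_mulVec {α ι : Type*} [CommSemiring α] [Fintype ι] (r : α)
    (v : ι → α) :
    v ⬝ᵥ ((r • Matrix.of fun _ _ => (1 : α)) *ᵥ v) = r * (∑ i, v i) ^ 2 := by
  simp only [dotProduct, mulVec, Matrix.smul_apply, of_apply, smul_eq_mul, mul_one, ← mul_sum]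
  rw [← sum_mul]
  ring

def IsDyadic {ι : Type*} (a : ι → ℝ) : Prop :=
  ∀ k, a k = 0 ∨ ∃ i : ℕ, a k = 2⁻¹ ^ (i + 1)

namespace IsDyadic

variable {ι : Type*} {a : ι → ℝ}

lemma nonneg (ha : IsDyadic a) (k : ι) : 0 ≤ a k := by
  rcases ha k with h | ⟨i, h⟩ <;> rw [h]; positivity

variable [Fintype ι] {c : ℝ}

lemma sum_filter_le_le_two_mul (ha : IsDyadic a)
    (hc : ∀ i : ℕ, (#{k | a k = 2⁻¹ ^ (i + 1)} : ℝ) ≤ c) (j : ι) :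
    ∑ k with a k ≤ a j, a k ≤ 2 * c * a j := by
  have ha' : ∀ k, ∃ i : ℕ, a k = 0 ∨ a k = 2⁻¹ ^ (i + 1) := fun k => by
    rcases ha k with h | ⟨i, h⟩
    exacts [⟨0, .inl h⟩, ⟨i, .inr h⟩]
  choose level hlevel using ha'
  have hc0 : 0 ≤ c := (Nat.cast_nonneg _).trans (hc 0)
  rcases ha j with hj | ⟨m, hm⟩
  · rw [hj, mul_zero]
    exact (sum_eq_zero fun k hk => le_antisymm (mem_filter.1 hk).2 (ha.nonneg k)).le
  set S := ({k | a k ≤ a j} : Finset ι).filter (a · ≠ 0)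
  have hS : ∀ k ∈ S, a k = 2⁻¹ ^ (level k + 1) := fun k hk =>
    (hlevel k).resolve_left (mem_filter.1 hk).2
  have hlevel_ge : ∀ i ∈ S.image level, m ≤ i := by
    simp only [mem_image]
    rintro _ ⟨k, hk, rfl⟩
    have : (2⁻¹ : ℝ) ^ (level k + 1) ≤ 2⁻¹ ^ (m + 1) := by
      rw [← hS k hk, ← hm]; simpa using (mem_filter.1 (mem_filter.1 hk).1).2
    have := (pow_le_pow_iff_right_of_lt_one₀ (by norm_num) (by norm_num)).1 this
    omega
  calc ∑ k with a k ≤ a j, a k = ∑ k ∈ S, a k := (sum_filter_ne_zero _).symm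
    _ = ∑ i ∈ S.image level, ∑ k ∈ S with level k = i, a k :=
        (sum_fiberwise_of_maps_to (fun k hk => mem_image_of_mem level hk) a).symm
    _ ≤ ∑ i ∈ S.image level, c * 2⁻¹ ^ (i + 1) := by
        gcongr with i
        calc ∑ k ∈ S with level k = i, a k
            ≤ ∑ k with a k = 2⁻¹ ^ (i + 1), a k := by
              refine sum_le_sum_of_subset_of_nonneg (fun k hk => ?_) fun k _ _ => ha.nonneg k
              obtain ⟨hkS, rfl⟩ := mem_filter.1 hk
              exact mem_filter.2 ⟨mem_univ k, hS k hkS⟩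
          _ = #{k | a k = 2⁻¹ ^ (i + 1)} * 2⁻¹ ^ (i + 1) := by
              rw [sum_congr rfl fun k hk => (mem_filter.1 hk).2, sum_const, nsmul_eq_mul]
          _ ≤ c * 2⁻¹ ^ (i + 1) := by gcongr; exact hc i
    _ ≤ c * 2⁻¹ ^ m := by rw [← mul_sum]; gcongr; exact sum_inv_two_pow_succ_le _ hlevel_ge
    _ = 2 * c * a j := by rw [hm]; ring

lemma sq_sum_le_four_mul_sum_sq (ha : IsDyadic a)
    (hc : ∀ i : ℕ, (#{k | a k = 2⁻¹ ^ (i + 1)} : ℝ) ≤ c) :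
    (∑ j, a j) ^ 2 ≤ 4 * c * ∑ j, a j ^ 2 :=
  calc (∑ j, a j) ^ 2 ≤ 2 * ∑ j, a j * ∑ k with a k ≤ a j, a k :=
        sq_sum_le_two_mul_sum_mul_sum_filter_le a ha.nonneg
    _ ≤ 2 * ∑ j, a j * (2 * c * a j) := by
        gcongr with j
        exacts [ha.nonneg j, ha.sum_filter_le_le_two_mul hc j]
    _ = 4 * c * ∑ j, a j ^ 2 := by
        simp only [mul_sum]; exact sum_congr rfl fun _ _ => by ring

end IsDyadic

/-- if every nonzero entry of `y` has absolute value a negative power of two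
`2^{−i−1}` (diadic decomposition `y = ∑ 2^{−i}u_i`) and every dyadic level has support of
size at most `n/d²`, then with `y'` the entrywise absolute value of `y` and `J` the
all-ones matrix: `y'ᵀ (d/n)J y' ≤ 4‖y‖²/d`. -/
theorem small_support_allones_bound
    (n d : ℕ) (hn : 0 < n) (hd : 0 < d)
    (y : Fin n → ℝ)
    (hdiadic : ∀ j, y j = 0 ∨ ∃ i : ℕ, |y j| = (2:ℝ)^(-(i:ℤ)-1))
    (hsupp : ∀ i : ℕ,
      ((Finset.univ.filter (fun j => |y j| = (2:ℝ)^(-(i:ℤ)-1))).card : ℝ) ≤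
        (n : ℝ) / (d : ℝ)^2) :
    (fun j => |y j|) ⬝ᵥ
        (((d : ℝ) / n) • Matrix.of (fun _ _ => (1 : ℝ))).mulVec (fun j => |y j|) ≤
      4 * (∑ j, (y j)^2) / d := by
  simp only [two_zpow_neg_natCast_sub_one] at hdiadic hsupp
  have hdyadic : IsDyadic fun j => |y j| := fun j => by simpa only [abs_eq_zero] using hdiadic j
  have key := hdyadic.sq_sum_le_four_mul_sum_sq hsupp
  simp only [sq_abs] at key
  rw [dotProduct_smul_ones_mulVec]
  calc (d : ℝ) / n * (∑ j, |y j|) ^ 2 ≤ d / n * (4 * (n / d ^ 2) * ∑ j, y j ^ 2) := by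
        gcongr
    _ = 4 * (∑ j, y j ^ 2) / d := by field_simp
end
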